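/- arXiv:1509.08571 — 2 statements merged into one kernel-verified Lean document; each statement's English description precedes it below -/
import Mathlib

section
/- Bob's side information is irrelevant for the values Alice can guarantee with high probability: v_sup^w(p, 𝒯_A, 𝒯_B) = v_sup^w(p, 𝒯_A, 𝟙) and v_sup^s(p, 𝒯_A, 𝒯_B) = v_sup^s(p, 𝒯_A, 𝟙); i.e., from Alice's perspective it is always as if Bob knows the state perfectly. -/
open Finset

/-- A behavioral strategy in the `n`-stage repeated game: at stage `i`, given the history of
past actions of both players (only the first `i` coordinates of the supplied sequences matter,
as enforced by `causal`) and the player's side information `si`, it assigns a probability to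
each action `x`. -/
structure BehavStrategy (A B SI Act : Type*) [Fintype A] [Fintype B] [Fintype Act] (n : ℕ) where
  prob : Fin n → (Fin n → A) → (Fin n → B) → SI → Act → ℝ
  nonneg : ∀ i ha hb si x, 0 ≤ prob i ha hb si x
  sum_one : ∀ i ha hb si, ∑ x, prob i ha hb si x = 1
  causal : ∀ (i : Fin n) (ha ha' : Fin n → A) (hb hb' : Fin n → B) (si : SI),
    (∀ j : Fin n, (j : ℕ) < (i : ℕ) → ha j = ha' j) →
    (∀ j : Fin n, (j : ℕ) < (i : ℕ) → hb j = hb' j) →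
    prob i ha hb si = prob i ha' hb' si

variable {S SA SB A B : Type*} [Fintype S] [Fintype A] [Fintype B]

/-- The probability that the state is `s` and the action sequences are `a, b`, under prior `p`,
side-information maps `TA, TB`, and behavioral strategies `α` (Alice) and `β` (Bob). -/
noncomputable def inducedP (p : S → ℝ) (TA : S → SA) (TB : S → SB) {n : ℕ}
    (α : BehavStrategy A B SA A n) (β : BehavStrategy A B SB B n)
    (s : S) (a : Fin n → A) (b : Fin n → B) : ℝ :=
  p s * ∏ i, (α.prob i a b (TA s) (a i) * β.prob i a b (TB s) (b i))

/-- Alice's time-average payoff `σ_n`. -/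
noncomputable def avgPay (g : S → A → B → ℝ) {n : ℕ} (s : S) (a : Fin n → A) (b : Fin n → B) : ℝ :=
  (n : ℝ)⁻¹ * ∑ i, g s (a i) (b i)

open scoped Classical in
/-- `P(σ_n < v)` under the induced distribution. -/
noncomputable def probBelow (g : S → A → B → ℝ) (p : S → ℝ) (TA : S → SA) (TB : S → SB)
    {n : ℕ} (α : BehavStrategy A B SA A n) (β : BehavStrategy A B SB B n) (v : ℝ) : ℝ :=
  ∑ s : S, ∑ a : Fin n → A, ∑ b : Fin n → B,
    if avgPay g s a b < v then inducedP p TA TB α β s a b else 0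

/-- Alice strongly guarantees `v`. -/
def StronglyGuarantees (g : S → A → B → ℝ) (p : S → ℝ) (TA : S → SA) (TB : S → SB)
    (v : ℝ) : Prop :=
  ∀ ε : ℝ, 0 < ε → ∃ N : ℕ, ∀ n : ℕ, N < n → ∃ α : BehavStrategy A B SA A n,
    ∀ β : BehavStrategy A B SB B n, probBelow g p TA TB α β v < ε

/-- Alice weakly guarantees `v`. -/
def WeaklyGuarantees (g : S → A → B → ℝ) (p : S → ℝ) (TA : S → SA) (TB : S → SB)
    (v : ℝ) : Prop :=
  ∀ ε : ℝ, 0 < ε → ∃ N : ℕ, ∀ n : ℕ, N < n → ∀ β : BehavStrategy A B SB B n,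
    ∃ α : BehavStrategy A B SA A n, probBelow g p TA TB α β v < ε

/-- `v_sup^s`, the supremum of strongly guaranteeable values. -/
noncomputable def vsupS (g : S → A → B → ℝ) (p : S → ℝ) (TA : S → SA) (TB : S → SB) : ℝ :=
  sSup {v : ℝ | StronglyGuarantees g p TA TB v}

/-- `v_sup^w`, the supremum of weakly guaranteeable values. -/
noncomputable def vsupW (g : S → A → B → ℝ) (p : S → ℝ) (TA : S → SA) (TB : S → SB) : ℝ :=
  sSup {v : ℝ | WeaklyGuarantees g p TA TB v}

/-- `u(q)`: the value of the one-stage game with averaged payoff table `∑ s, q s • g s`. -/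
noncomputable def uVal (g : S → A → B → ℝ) (q : S → ℝ) : ℝ :=
  ⨆ x : {x : A → ℝ // (∀ a, 0 ≤ x a) ∧ ∑ a, x a = 1},
    ⨅ b : B, ∑ s : S, ∑ a : A, q s * x.1 a * g s a b

/-- Expected time-average payoff `E[σ_n]`. -/
noncomputable def expPay (g : S → A → B → ℝ) (p : S → ℝ) (TA : S → SA) (TB : S → SB)
    {n : ℕ} (α : BehavStrategy A B SA A n) (β : BehavStrategy A B SB B n) : ℝ :=
  ∑ s : S, ∑ a : Fin n → A, ∑ b : Fin n → B,
    inducedP p TA TB α β s a b * avgPay g s a b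

/-- `V_n(q)`: the maximin expected average payoff of the `n`-stage game with prior `q`,
no side information for Alice and full information for Bob. -/
noncomputable def Vn (g : S → A → B → ℝ) (q : S → ℝ) (n : ℕ) : ℝ :=
  ⨆ α : BehavStrategy A B Unit A n, ⨅ β : BehavStrategy A B S B n,
    expPay g q (fun _ => ()) (id : S → S) α β

/-!
A Bob who knows the state can be imitated, up to a constant factor in probabilities, by a Bob who
knows nothing: draw a guess of the state uniformly at random and play the fully informed strategy
for that guess. By Kuhn's theorem this mixture is a behavioral strategy, namely the one playing at
each stage the posterior average of the fully informed stage strategies given Bob's own past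
actions. Every outcome then has at least `1 / |𝒮|` times its former probability, so Alice's
guarantees against an informed Bob and against a `𝒯_B`-informed Bob coincide (the other direction
being trivial, as a `𝒯_B`-informed strategy is a fully informed one).
-/

namespace BehavStrategy

variable {SI SI' Act : Type*} [Fintype Act] {n : ℕ}

def comap (f : SI' → SI) (σ : BehavStrategy A B SI Act n) : BehavStrategy A B SI' Act n where
  prob i a b s := σ.prob i a b (f s)
  nonneg i a b s := σ.nonneg i a b (f s)
  sum_one i a b s := σ.sum_one i a b (f s)
  causal i a a' b b' s := σ.causal i a a' b b' (f s)

def prefixProb (β : BehavStrategy A B SI B n) (a : Fin n → A) (b : Fin n → B) (s : SI)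
    (m : ℕ) : ℝ :=
  ∏ j : Fin n with j.val < m, β.prob j a b s (b j)

section prefixProb

variable (β : BehavStrategy A B SI B n) (a : Fin n → A) (b : Fin n → B) (s : SI)

lemma prefixProb_nonneg (m : ℕ) : 0 ≤ β.prefixProb a b s m :=
  prod_nonneg fun j _ => β.nonneg j a b s (b j)

@[simp]
lemma prefixProb_zero : β.prefixProb a b s 0 = 1 := by
  simp [prefixProb]

lemma prefixProb_self : β.prefixProb a b s n = ∏ j, β.prob j a b s (b j) := by
  simp [prefixProb]

lemma prefixProb_succ {m : ℕ} (hm : m < n) :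
    β.prefixProb a b s (m + 1) = β.prefixProb a b s m * β.prob ⟨m, hm⟩ a b s (b ⟨m, hm⟩) := by
  have hfilter : (univ.filter fun j : Fin n => (j : ℕ) < m + 1)
      = insert ⟨m, hm⟩ (univ.filter fun j : Fin n => (j : ℕ) < m) := by
    ext j
    simp only [mem_filter, mem_univ, true_and, mem_insert, Fin.ext_iff]
    omega
  rw [prefixProb, hfilter, prod_insert (by simp), mul_comm, prefixProb]

lemma prefixProb_congr {a' : Fin n → A} {b' : Fin n → B} {m : ℕ}
    (ha : ∀ j : Fin n, (j : ℕ) < m → a j = a' j) (hb : ∀ j : Fin n, (j : ℕ) < m → b j = b' j) :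
    β.prefixProb a b s m = β.prefixProb a' b' s m := by
  refine prod_congr rfl fun j hj => ?_
  have hjm : (j : ℕ) < m := (mem_filter.1 hj).2
  rw [hb j hjm, β.causal j a a' b b' s (fun k hk => ha k (by omega)) (fun k hk => hb k (by omega))]

end prefixProb

section mix

variable (w : S → ℝ) (hw : ∀ s, 0 ≤ w s) (β : BehavStrategy A B S B n)
  (a : Fin n → A) (b : Fin n → B)

def mixPrefixProb (m : ℕ) : ℝ :=
  ∑ s, w s * β.prefixProb a b s m

include hw in
lemma mixPrefixProb_nonneg (m : ℕ) : 0 ≤ mixPrefixProb w β a b m :=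
  sum_nonneg fun s _ => mul_nonneg (hw s) (β.prefixProb_nonneg a b s m)

lemma mixPrefixProb_zero : mixPrefixProb w β a b 0 = ∑ s, w s := by
  simp [mixPrefixProb]

lemma sum_mul_prob_eq_mixPrefixProb_succ {m : ℕ} (hm : m < n) :
    ∑ s, w s * β.prefixProb a b s m * β.prob ⟨m, hm⟩ a b s (b ⟨m, hm⟩)
      = mixPrefixProb w β a b (m + 1) := by
  simp only [mixPrefixProb, β.prefixProb_succ a b _ hm, mul_assoc]

include hw in
lemma mixPrefixProb_succ_eq_zero {m : ℕ} (hm : m < n) (h : mixPrefixProb w β a b m = 0) :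
    mixPrefixProb w β a b (m + 1) = 0 := by
  have hterm := (sum_eq_zero_iff_of_nonneg fun s _ =>
    mul_nonneg (hw s) (β.prefixProb_nonneg a b s m)).1 h
  refine sum_eq_zero fun s hs => ?_
  rw [β.prefixProb_succ a b s hm, ← mul_assoc, hterm s hs, zero_mul]

/-- Kuhn's behavioral form of the mixture that draws `s` with weight `w s` and then plays
`β · · · s`; Bob's own information is ignored. After a history of mixture probability zero it
plays uniformly, an arbitrary choice. -/
noncomputable def mix [Nonempty B] : BehavStrategy A B SI B n where
  prob i a b _ x :=
    if mixPrefixProb w β a b i = 0 then (Fintype.card B : ℝ)⁻¹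
    else (∑ s, w s * β.prefixProb a b s i * β.prob i a b s x) / mixPrefixProb w β a b i
  nonneg i a b _ x := by
    split_ifs
    · positivity
    · exact div_nonneg (sum_nonneg fun s _ => mul_nonneg (mul_nonneg (hw s)
        (β.prefixProb_nonneg a b s i)) (β.nonneg i a b s x)) (mixPrefixProb_nonneg w hw β a b i)
  sum_one i a b _ := by
    split_ifs with h
    · simp
    · rw [← sum_div, sum_comm, div_eq_one_iff_eq h]
      simp only [← mul_sum, β.sum_one, mul_one, mixPrefixProb]
  causal i a a' b b' _ ha hb := by
    have hpre : ∀ s, β.prefixProb a b s i = β.prefixProb a' b' s i :=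
      fun s => β.prefixProb_congr a b s ha hb
    have hmix : mixPrefixProb w β a b i = mixPrefixProb w β a' b' i := by
      simp only [mixPrefixProb, hpre]
    funext x
    simp only [hmix, hpre, β.causal i a a' b b' _ ha hb]

variable [Nonempty B]

lemma mixPrefixProb_le_mul_prefixProb_mix (t : SI) {m : ℕ} (hm : m ≤ n) :
    mixPrefixProb w β a b m
      ≤ mixPrefixProb w β a b 0 * (mix w hw β : BehavStrategy A B SI B n).prefixProb a b t m := by
  induction m with
  | zero => simp
  | succ m ih =>
    have hlt : m < n := hm
    rw [prefixProb_succ _ _ _ _ hlt, ← mul_assoc]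
    by_cases h : mixPrefixProb w β a b m = 0
    · rw [mixPrefixProb_succ_eq_zero w hw β a b hlt h]
      exact mul_nonneg (mul_nonneg (mixPrefixProb_nonneg w hw β a b 0)
        (prefixProb_nonneg _ _ _ _ _)) ((mix w hw β).nonneg _ _ _ _ _)
    · have hstep : (mix w hw β : BehavStrategy A B SI B n).prob ⟨m, hlt⟩ a b t (b ⟨m, hlt⟩)
          = mixPrefixProb w β a b (m + 1) / mixPrefixProb w β a b m := by
        simp only [mix, if_neg h, sum_mul_prob_eq_mixPrefixProb_succ w β a b hlt]
      rw [hstep]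
      calc mixPrefixProb w β a b (m + 1)
          = mixPrefixProb w β a b m * (mixPrefixProb w β a b (m + 1) / mixPrefixProb w β a b m) :=
            (mul_div_cancel₀ _ h).symm
        _ ≤ _ := mul_le_mul_of_nonneg_right (ih hlt.le)
            (div_nonneg (mixPrefixProb_nonneg w hw β a b _) (mixPrefixProb_nonneg w hw β a b _))

lemma mul_prefixProb_le_prefixProb_mix (hw1 : ∑ s, w s ≤ 1) (s : S) (t : SI) {m : ℕ}
    (hm : m ≤ n) :
    w s * β.prefixProb a b s m ≤ (mix w hw β : BehavStrategy A B SI B n).prefixProb a b t m := by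
  have hsingle : w s * β.prefixProb a b s m ≤ mixPrefixProb w β a b m :=
    single_le_sum (f := fun s => w s * β.prefixProb a b s m)
      (fun s _ => mul_nonneg (hw s) (β.prefixProb_nonneg a b s m)) (mem_univ s)
  calc w s * β.prefixProb a b s m
      ≤ mixPrefixProb w β a b 0 * (mix w hw β : BehavStrategy A B SI B n).prefixProb a b t m :=
        hsingle.trans (mixPrefixProb_le_mul_prefixProb_mix w hw β a b t hm)
    _ ≤ _ := by
        rw [mixPrefixProb_zero]
        exact mul_le_of_le_one_left (prefixProb_nonneg _ _ _ _ _) hw1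

end mix

end BehavStrategy

section mixing

variable (g : S → A → B → ℝ) {p : S → ℝ} (hp : ∀ s, 0 ≤ p s) (TA : S → SA) (TB : S → SB)
  {n : ℕ}

omit [Fintype S] in
lemma inducedP_eq_mul_prefixProb (α : BehavStrategy A B SA A n) (β : BehavStrategy A B SB B n)
    (s : S) (a : Fin n → A) (b : Fin n → B) :
    inducedP p TA TB α β s a b
      = p s * (∏ i, α.prob i a b (TA s) (a i)) * β.prefixProb a b (TB s) n := by
  rw [inducedP, prod_mul_distrib, β.prefixProb_self, mul_assoc]

include hp

omit [Fintype S] in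
lemma inducedP_nonneg (α : BehavStrategy A B SA A n) (β : BehavStrategy A B SB B n)
    (s : S) (a : Fin n → A) (b : Fin n → B) : 0 ≤ inducedP p TA TB α β s a b :=
  mul_nonneg (hp s) (prod_nonneg fun i _ =>
    mul_nonneg (α.nonneg i a b (TA s) (a i)) (β.nonneg i a b (TB s) (b i)))

variable [Nonempty B] {w : S → ℝ} (hw : ∀ s, 0 ≤ w s) (hw1 : ∑ s, w s ≤ 1)
include hw1

lemma mul_inducedP_le_inducedP_mix (α : BehavStrategy A B SA A n) (β : BehavStrategy A B S B n)
    (s : S) (a : Fin n → A) (b : Fin n → B) :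
    w s * inducedP p TA id α β s a b ≤ inducedP p TA TB α (β.mix w hw) s a b := by
  rw [inducedP_eq_mul_prefixProb, inducedP_eq_mul_prefixProb, mul_left_comm]
  exact mul_le_mul_of_nonneg_left (β.mul_prefixProb_le_prefixProb_mix w hw a b hw1 s _ le_rfl)
    (mul_nonneg (hp s) (prod_nonneg fun i _ => α.nonneg i a b (TA s) (a i)))

lemma mul_probBelow_le_probBelow_mix {c : ℝ} (hc : ∀ s, c ≤ w s) (α : BehavStrategy A B SA A n)
    (β : BehavStrategy A B S B n) (v : ℝ) :
    c * probBelow g p TA id α β v ≤ probBelow g p TA TB α (β.mix w hw) v := by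
  simp only [probBelow, mul_sum]
  gcongr with s _ a _ b _
  split_ifs
  · exact (mul_le_mul_of_nonneg_right (hc s) (inducedP_nonneg hp TA id α β s a b)).trans
      (mul_inducedP_le_inducedP_mix hp TA TB hw hw1 α β s a b)
  · rw [mul_zero]

end mixing

section guarantees

variable [Nonempty S] [Nonempty B] (g : S → A → B → ℝ) {p : S → ℝ} (hp : ∀ s, 0 ≤ p s)
  (TA : S → SA) (TB : S → SB)
include hp

lemma exists_forall_inv_card_mul_probBelow_le {n : ℕ} (β : BehavStrategy A B S B n) :
    ∃ β' : BehavStrategy A B SB B n, ∀ α v,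
      (Fintype.card S : ℝ)⁻¹ * probBelow g p TA id α β v ≤ probBelow g p TA TB α β' v := by
  have hcard : (0 : ℝ) < Fintype.card S := Nat.cast_pos.2 Fintype.card_pos
  have hw : ∀ s : S, 0 ≤ (Fintype.card S : ℝ)⁻¹ := fun _ => inv_nonneg.2 hcard.le
  have hw1 : ∑ _s : S, (Fintype.card S : ℝ)⁻¹ ≤ 1 := by
    rw [sum_const, card_univ, nsmul_eq_mul, mul_inv_cancel₀ hcard.ne']
  exact ⟨β.mix _ hw, (mul_probBelow_le_probBelow_mix g hp TA TB hw hw1 (fun _ => le_rfl) · β)⟩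

lemma stronglyGuarantees_iff_id (v : ℝ) :
    StronglyGuarantees g p TA TB v ↔ StronglyGuarantees g p TA id v := by
  have hc : (0 : ℝ) < (Fintype.card S : ℝ)⁻¹ := inv_pos.2 (Nat.cast_pos.2 Fintype.card_pos)
  refine ⟨fun h ε hε => ?_, fun h ε hε => ?_⟩
  · obtain ⟨N, hN⟩ := h _ (mul_pos hc hε)
    refine ⟨N, fun n hn => ?_⟩
    obtain ⟨α, hα⟩ := hN n hn
    refine ⟨α, fun β => ?_⟩
    obtain ⟨β', hβ'⟩ := exists_forall_inv_card_mul_probBelow_le g hp TA TB β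
    exact lt_of_mul_lt_mul_left ((hβ' α v).trans_lt (hα β')) hc.le
  · exact (h ε hε).imp fun N hN n hn => (hN n hn).imp fun α hα β => hα (β.comap TB)

lemma weaklyGuarantees_iff_id (v : ℝ) :
    WeaklyGuarantees g p TA TB v ↔ WeaklyGuarantees g p TA id v := by
  have hc : (0 : ℝ) < (Fintype.card S : ℝ)⁻¹ := inv_pos.2 (Nat.cast_pos.2 Fintype.card_pos)
  refine ⟨fun h ε hε => ?_, fun h ε hε => ?_⟩
  · obtain ⟨N, hN⟩ := h _ (mul_pos hc hε)
    refine ⟨N, fun n hn β => ?_⟩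
    obtain ⟨β', hβ'⟩ := exists_forall_inv_card_mul_probBelow_le g hp TA TB β
    obtain ⟨α, hα⟩ := hN n hn β'
    exact ⟨α, lt_of_mul_lt_mul_left ((hβ' α v).trans_lt hα) hc.le⟩
  · exact (h ε hε).imp fun N hN n hn β => hN n hn (β.comap TB)

end guarantees

theorem stmt4_general {S SA SB A B : Type*} [Fintype S] [Fintype A] [Fintype B]
    [Nonempty S] [Nonempty B]
    (g : S → A → B → ℝ) (p : S → ℝ) (hp : ∀ s, 0 < p s)
    (TA : S → SA) (TB : S → SB) :
    (vsupW g p TA TB = vsupW g p TA (id : S → S)) ∧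
    (vsupS g p TA TB = vsupS g p TA (id : S → S)) := by
  have hp' : ∀ s, 0 ≤ p s := fun s => (hp s).le
  exact ⟨congrArg sSup (Set.ext (weaklyGuarantees_iff_id g hp' TA TB)),
    congrArg sSup (Set.ext (stronglyGuarantees_iff_id g hp' TA TB))⟩

/-- Bob's side information is irrelevant for the values Alice can guarantee
with high probability: replacing `𝒯_B` by the full-information map `𝟙` changes neither
`v_sup^w` nor `v_sup^s`. -/
theorem stmt4 {S SA SB A B : Type*} [Fintype S] [Fintype SA] [Fintype SB] [Fintype A] [Fintype B]
    [Nonempty S] [Nonempty SA] [Nonempty SB] [Nonempty A] [Nonempty B]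
    (g : S → A → B → ℝ) (p : S → ℝ) (hp : ∀ s, 0 < p s) (hp1 : ∑ s, p s = 1)
    (TA : S → SA) (TB : S → SB) :
    (vsupW g p TA TB = vsupW g p TA (id : S → S)) ∧
    (vsupS g p TA TB = vsupS g p TA (id : S → S)) :=
  stmt4_general g p hp TA TB
end

section
/- v_sup^s(p, ∅, 𝟙) ≥ inf { u(q) : q a probability distribution on 𝒮 }; i.e., when Alice has no side information and Bob knows the state exactly, Alice can strongly guarantee any value below the minimum over priors q of the value u(q) of the one-stage averaged game. -/
open Finset

variable {S SA SB A B : Type*} [Fintype S] [Fintype A] [Fintype B]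

/-!
Alice ignores her (trivial) information and plays Blackwell's approachability strategy for the
vector payoff `(g t)_{t ∈ S}` and the orthant `{z | ∀ t, w ≤ z t}`, where `w` is below every
`u(q)`. After `m` stages let `d t = (m w - ∑_{i<m} g t (a i) (b i))⁺` be the shortfall in state
`t`; at stage `m` Alice plays an optimal action of the one-shot game averaged with the prior
`q ∝ d`. Whatever Bob does, even knowing the state, this makes the expected cross term
`∑ t, d t * (w - g t)` nonpositive, so the potential `∑ t, (d t)²` grows in expectation by at most
a constant per stage. In state `s`, `σ_n < w - δ` forces `d s ≥ n δ`, and Markov's inequality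
bounds its probability by `O(1 / (n δ²))`.
-/

open Function

theorem exists_forall_abs_le (g : S → A → B → ℝ) : ∃ G, ∀ s a b, |g s a b| ≤ G := by
  obtain ⟨G, hG⟩ := Finite.exists_le fun z : S × A × B => |g z.1 z.2.1 z.2.2|
  exact ⟨G, fun s a b => hG (s, a, b)⟩

section OneShot

variable [Nonempty A] [Nonempty B]

theorem exists_mem_stdSimplex_uVal_eq (g : S → A → B → ℝ) (q : S → ℝ) :
    ∃ x ∈ stdSimplex ℝ A, uVal g q = ⨅ b, ∑ s, ∑ a, q s * x a * g s a b := by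
  classical
  set F : (A → ℝ) → ℝ := fun x => ⨅ b, ∑ s, ∑ a, q s * x a * g s a b
  have hF : Continuous F := by
    simp only [F, ← inf'_univ_eq_ciInf]
    exact Continuous.finset_inf'_apply univ_nonempty fun b _ => by fun_prop
  obtain ⟨a₀⟩ := ‹Nonempty A›
  obtain ⟨x, hx, hmax⟩ := (isCompact_stdSimplex ℝ A).exists_isMaxOn
    ⟨_, single_mem_stdSimplex ℝ a₀⟩ hF.continuousOn
  have : Nonempty {x : A → ℝ // (∀ a, 0 ≤ x a) ∧ ∑ a, x a = 1} := ⟨⟨x, hx⟩⟩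
  refine ⟨x, hx, le_antisymm (ciSup_le fun y => hmax y.2) ?_⟩
  refine le_ciSup (f := fun y : stdSimplex ℝ A => F y) ⟨F x, ?_⟩ ⟨x, hx⟩
  rintro _ ⟨y, rfl⟩
  exact hmax y.2

theorem exists_mem_stdSimplex_forall_uVal_le (g : S → A → B → ℝ) (q : S → ℝ) :
    ∃ x ∈ stdSimplex ℝ A, ∀ b, uVal g q ≤ ∑ s, ∑ a, q s * x a * g s a b := by
  obtain ⟨x, hx, hu⟩ := exists_mem_stdSimplex_uVal_eq g q
  exact ⟨x, hx, fun b => hu ▸ ciInf_le (Set.finite_range _).bddBelow b⟩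

theorem neg_le_uVal {g : S → A → B → ℝ} {G : ℝ} (hG : ∀ s a b, |g s a b| ≤ G) {q : S → ℝ}
    (hq : q ∈ stdSimplex ℝ S) : -G ≤ uVal g q := by
  obtain ⟨x, hx, hu⟩ := exists_mem_stdSimplex_uVal_eq g q
  rw [hu]
  refine le_ciInf fun b => ?_
  calc -G = ∑ s, ∑ a, q s * x a * -G := by
        simp only [← sum_mul, ← mul_sum, hx.2, hq.2, mul_one, one_mul]
    _ ≤ ∑ s, ∑ a, q s * x a * g s a b := by
        gcongr with s _ a _
        · exact mul_nonneg (hq.1 s) (hx.1 a)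
        · exact neg_le_of_abs_le (hG s a b)

theorem iInf_uVal_le {g : S → A → B → ℝ} {q : S → ℝ} (hq : q ∈ stdSimplex ℝ S) :
    (⨅ q : {q : S → ℝ // (∀ s, 0 ≤ q s) ∧ ∑ s, q s = 1}, uVal g q.1) ≤ uVal g q := by
  obtain ⟨G, hG⟩ := exists_forall_abs_le g
  refine ciInf_le ⟨-G, ?_⟩ (⟨q, hq⟩ : {q : S → ℝ // (∀ s, 0 ≤ q s) ∧ ∑ s, q s = 1})
  rintro _ ⟨q, rfl⟩
  exact neg_le_uVal hG q.2

end OneShot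

theorem sum_sum_update_eq_card_smul {ι X M : Type*} [Fintype ι] [DecidableEq ι] [Fintype X]
    [AddCommMonoid M] (k : ι) (h : (ι → X) → M) :
    ∑ f, ∑ x, h (update f k x) = Fintype.card X • ∑ f, h f := by
  let e : (ι → X) × X ≃ (ι → X) × X :=
    { toFun := fun p => (update p.1 k p.2, p.1 k)
      invFun := fun p => (update p.1 k p.2, p.1 k)
      left_inv := fun p => by simp
      right_inv := fun p => by simp }
  calc ∑ f, ∑ x, h (update f k x) = ∑ p, h (e p).1 := by
        rw [Fintype.sum_prod_type]; rfl
    _ = ∑ p : (ι → X) × X, h p.1 := e.sum_comp fun p => h p.1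
    _ = Fintype.card X • ∑ f, h f := by
        rw [Fintype.sum_prod_type, ← sum_nsmul]
        simp

@[to_additive]
theorem prod_ite_val_lt_succ {M : Type*} [CommMonoid M] {n : ℕ} (k : Fin n) (f : Fin n → M) :
    ∏ i : Fin n, (if (i : ℕ) < k + 1 then f i else 1) =
      (∏ i : Fin n, if (i : ℕ) < k then f i else 1) * f k := by
  simp only [← prod_filter]
  have : univ.filter (fun i : Fin n => (i : ℕ) < k + 1) =
      insert k (univ.filter fun i : Fin n => (i : ℕ) < k) := by
    ext i
    simp only [mem_filter, mem_univ, true_and, mem_insert, Fin.ext_iff]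
    omega
  rw [this, prod_insert (by simp), mul_comm]

section Play

variable {S SA SB A B : Type*} [Fintype A] [Fintype B] {n : ℕ}

def AgreeBefore {X : Type*} (m : ℕ) (c c' : Fin n → X) : Prop :=
  ∀ j : Fin n, (j : ℕ) < m → c j = c' j

def DependsBefore {X : Type*} (m : ℕ) (F : (Fin n → A) → (Fin n → B) → X) : Prop :=
  ∀ a a' b b', AgreeBefore m a a' → AgreeBefore m b b' → F a b = F a' b'

namespace AgreeBefore

variable {X : Type*} {m m' : ℕ} {c c' : Fin n → X}

theorem mono (h : m ≤ m') (hc : AgreeBefore m' c c') : AgreeBefore m c c' :=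
  fun j hj => hc j (hj.trans_le h)

theorem update_left (k : Fin n) (z : X) (c : Fin n → X) : AgreeBefore k (update c k z) c :=
  fun _ hj => update_of_ne (Fin.ne_of_lt hj) _ _

theorem update_succ {k : Fin n} (hc : AgreeBefore k c c') (z : X) :
    AgreeBefore (k + 1) (update c k z) (update c' k z) := by
  intro j hj
  rcases eq_or_ne j k with rfl | hjk
  · simp
  · rw [update_of_ne hjk, update_of_ne hjk]
    exact hc j (by omega)

end AgreeBefore

namespace DependsBefore

variable {X Y Z : Type*} {m m' : ℕ} {F : (Fin n → X) → (Fin n → Y) → Z}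

theorem mono (h : m ≤ m') (hF : DependsBefore m F) : DependsBefore m' F :=
  fun a a' b b' ha hb => hF a a' b b' (ha.mono h) (hb.mono h)

theorem apply_update {k : Fin n} (hF : DependsBefore k F) (a : Fin n → X) (b : Fin n → Y)
    (x : X) (y : Y) : F (update a k x) (update b k y) = F a b :=
  hF _ _ _ _ (.update_left k x a) (.update_left k y b)

end DependsBefore

theorem BehavStrategy.dependsBefore_prob {SI Act : Type*} [Fintype Act]
    (α : BehavStrategy A B SI Act n) (i : Fin n) (si : SI) :
    DependsBefore i fun a b => α.prob i a b si :=
  fun a a' b b' => α.causal i a a' b b' si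

noncomputable def BehavStrategy.uniform {SI Act : Type*} [Fintype Act] [Nonempty Act] (n : ℕ) :
    BehavStrategy A B SI Act n where
  prob _ _ _ _ _ := (Fintype.card Act : ℝ)⁻¹
  nonneg _ _ _ _ _ := by positivity
  sum_one _ _ _ _ := by simp
  causal _ _ _ _ _ _ _ _ := rfl

variable (α : BehavStrategy A B SA A n) (β : BehavStrategy A B SB B n) (sa : SA) (sb : SB)

/-- Only the first `m` stages are weighted, so a sum over all histories counts each length-`m`
prefix once for every choice of the remaining `n - m` stages. -/
noncomputable def playWeight (m : ℕ) (a : Fin n → A) (b : Fin n → B) : ℝ :=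
  ∏ i : Fin n, if (i : ℕ) < m then α.prob i a b sa (a i) * β.prob i a b sb (b i) else 1

noncomputable def stageMean (k : Fin n) (F : (Fin n → A) → (Fin n → B) → ℝ)
    (a : Fin n → A) (b : Fin n → B) : ℝ :=
  ∑ x, ∑ y, α.prob k a b sa x * β.prob k a b sb y * F (update a k x) (update b k y)

noncomputable def playExpect (F : (Fin n → A) → (Fin n → B) → ℝ) : ℝ :=
  ∑ a, ∑ b, playWeight α β sa sb n a b * F a b

theorem inducedP_eq_mul_playWeight (p : S → ℝ) (TA : S → SA) (TB : S → SB) (s : S)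
    (a : Fin n → A) (b : Fin n → B) :
    inducedP p TA TB α β s a b = p s * playWeight α β (TA s) (TB s) n a b := by
  simp [inducedP, playWeight]

theorem playWeight_nonneg (m : ℕ) (a : Fin n → A) (b : Fin n → B) :
    0 ≤ playWeight α β sa sb m a b :=
  prod_nonneg fun i _ => by
    split_ifs
    exacts [mul_nonneg (α.nonneg ..) (β.nonneg ..), zero_le_one]

theorem playWeight_zero (a : Fin n → A) (b : Fin n → B) : playWeight α β sa sb 0 a b = 1 := by
  simp [playWeight]

theorem playWeight_succ (k : Fin n) (a : Fin n → A) (b : Fin n → B) :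
    playWeight α β sa sb (k + 1) a b =
      playWeight α β sa sb k a b * (α.prob k a b sa (a k) * β.prob k a b sb (b k)) :=
  prod_ite_val_lt_succ k _

theorem dependsBefore_playWeight (m : ℕ) : DependsBefore m (playWeight α β sa sb m) := by
  intro a a' b b' ha hb
  refine prod_congr rfl fun i _ => ?_
  split_ifs with hi
  · rw [α.causal i a a' b b' sa (ha.mono hi.le) (hb.mono hi.le),
      β.causal i a a' b b' sb (ha.mono hi.le) (hb.mono hi.le), ha i hi, hb i hi]
  · rfl

theorem dependsBefore_stageMean (k : Fin n) {F : (Fin n → A) → (Fin n → B) → ℝ}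
    (hF : DependsBefore (k + 1) F) : DependsBefore k (stageMean α β sa sb k F) := by
  intro a a' b b' ha hb
  simp only [stageMean, α.causal k a a' b b' sa ha hb, β.causal k a a' b b' sb ha hb,
    hF _ _ _ _ (ha.update_succ _) (hb.update_succ _)]

theorem stageMean_of_dependsBefore (k : Fin n) {F : (Fin n → A) → (Fin n → B) → ℝ}
    (hF : DependsBefore k F) (a : Fin n → A) (b : Fin n → B) :
    stageMean α β sa sb k F a b = F a b := by
  simp only [stageMean, hF.apply_update, mul_right_comm _ _ (F a b), ← sum_mul, ← mul_sum,
    α.sum_one, β.sum_one, mul_one, one_mul]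

theorem card_mul_sum_playWeight_succ_mul (k : Fin n) (F : (Fin n → A) → (Fin n → B) → ℝ) :
    (Fintype.card A * Fintype.card B : ℝ) * ∑ a, ∑ b, playWeight α β sa sb (k + 1) a b * F a b =
      ∑ a, ∑ b, playWeight α β sa sb k a b * stageMean α β sa sb k F a b := by
  set φ := fun a b => playWeight α β sa sb (k + 1) a b * F a b
  have hφ (a : Fin n → A) (b : Fin n → B) (x : A) (y : B) :
      φ (update a k x) (update b k y) = playWeight α β sa sb k a b *
        (α.prob k a b sa x * β.prob k a b sb y * F (update a k x) (update b k y)) := by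
    simp only [φ, playWeight_succ, (dependsBefore_playWeight α β sa sb k).apply_update,
      (α.dependsBefore_prob k sa).apply_update, (β.dependsBefore_prob k sb).apply_update,
      update_self]
    ring
  calc (Fintype.card A * Fintype.card B : ℝ) * ∑ a, ∑ b, φ a b
      = ∑ a, ∑ x, ∑ b, ∑ y, φ (update a k x) (update b k y) := by
        simp only [sum_sum_update_eq_card_smul k (φ (update _ k _)), ← smul_sum]
        rw [sum_sum_update_eq_card_smul k fun a => ∑ b, φ a b, smul_smul, nsmul_eq_mul,
          mul_comm (Fintype.card B), Nat.cast_mul]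
    _ = ∑ a, ∑ b, playWeight α β sa sb k a b * stageMean α β sa sb k F a b := by
        simp only [hφ, stageMean, mul_sum]
        exact sum_congr rfl fun a _ => sum_comm

theorem card_pow_mul_sum_playWeight_mul {k m : ℕ} (hkm : k ≤ m) (hmn : m ≤ n)
    {F : (Fin n → A) → (Fin n → B) → ℝ} (hF : DependsBefore k F) :
    (Fintype.card A * Fintype.card B : ℝ) ^ (m - k) *
        ∑ a, ∑ b, playWeight α β sa sb m a b * F a b =
      ∑ a, ∑ b, playWeight α β sa sb k a b * F a b := by
  induction m, hkm using Nat.le_induction with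
  | base => simp
  | succ m hkm ih =>
    have hm : m < n := hmn
    rw [Nat.sub_add_comm hkm, pow_succ, mul_assoc,
      card_mul_sum_playWeight_succ_mul α β sa sb ⟨m, hm⟩ F]
    simp only [stageMean_of_dependsBefore α β sa sb ⟨m, hm⟩ (hF.mono hkm)]
    exact ih hm.le

variable {α β sa sb} in
theorem playExpect_mono {F G : (Fin n → A) → (Fin n → B) → ℝ} (h : ∀ a b, F a b ≤ G a b) :
    playExpect α β sa sb F ≤ playExpect α β sa sb G :=
  sum_le_sum fun a _ => sum_le_sum fun b _ =>
    mul_le_mul_of_nonneg_left (h a b) (playWeight_nonneg α β sa sb n a b)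

variable [Nonempty A] [Nonempty B]

theorem playExpect_const (c : ℝ) : playExpect α β sa sb (fun _ _ => c) = c := by
  have h := card_pow_mul_sum_playWeight_mul α β sa sb n.zero_le le_rfl
    (F := fun _ _ => c) fun _ _ _ _ _ _ => rfl
  simp only [playWeight_zero, one_mul, sum_const, card_univ, Fintype.card_fun, Fintype.card_fin,
    nsmul_eq_mul, Nat.sub_zero, Nat.cast_pow, ← mul_assoc, ← mul_pow] at h
  exact mul_left_cancel₀ (pow_ne_zero n (by simp : (Fintype.card A * Fintype.card B : ℝ) ≠ 0)) h

theorem playExpect_stageMean (k : Fin n) {F : (Fin n → A) → (Fin n → B) → ℝ}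
    (hF : DependsBefore (k + 1) F) :
    playExpect α β sa sb (stageMean α β sa sb k F) = playExpect α β sa sb F := by
  refine mul_left_cancel₀
    (pow_ne_zero (n - k) (by simp : (Fintype.card A * Fintype.card B : ℝ) ≠ 0)) ?_
  rw [playExpect, card_pow_mul_sum_playWeight_mul α β sa sb k.is_lt.le le_rfl
    (dependsBefore_stageMean α β sa sb k hF), playExpect,
    show n - k = n - (k + 1) + 1 by omega, pow_succ', mul_assoc,
    card_pow_mul_sum_playWeight_mul α β sa sb k.is_lt le_rfl hF,
    card_mul_sum_playWeight_succ_mul]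

theorem playExpect_add_const (F : (Fin n → A) → (Fin n → B) → ℝ) (c : ℝ) :
    playExpect α β sa sb (fun a b => F a b + c) = playExpect α β sa sb F + c := by
  conv_rhs => rw [← playExpect_const α β sa sb c]
  simp only [playExpect, mul_add, sum_add_distrib]

end Play

section Potential

variable {S A B : Type*} {n : ℕ}

noncomputable def cumPayoff (g : S → A → B → ℝ) (m : ℕ) (a : Fin n → A) (b : Fin n → B)
    (t : S) : ℝ :=
  ∑ i : Fin n, if (i : ℕ) < m then g t (a i) (b i) else 0

noncomputable def shortfall (g : S → A → B → ℝ) (w : ℝ) (m : ℕ) (a : Fin n → A) (b : Fin n → B)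
    (t : S) : ℝ :=
  max (m * w - cumPayoff g m a b t) 0

noncomputable def potential [Fintype S] (g : S → A → B → ℝ) (w : ℝ) (m : ℕ) (a : Fin n → A)
    (b : Fin n → B) : ℝ :=
  ∑ t, shortfall g w m a b t ^ 2

variable {g : S → A → B → ℝ} {w : ℝ}

theorem dependsBefore_cumPayoff (m : ℕ) : DependsBefore m (cumPayoff (n := n) g m) := by
  intro a a' b b' ha hb
  funext t
  refine sum_congr rfl fun i _ => ?_
  split_ifs with hi
  · rw [ha i hi, hb i hi]
  · rfl

theorem dependsBefore_shortfall (m : ℕ) : DependsBefore m (shortfall (n := n) g w m) := by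
  intro a a' b b' ha hb
  funext t
  rw [shortfall, shortfall, dependsBefore_cumPayoff m a a' b b' ha hb]

theorem shortfall_nonneg (m : ℕ) (a : Fin n → A) (b : Fin n → B) (t : S) :
    0 ≤ shortfall g w m a b t :=
  le_max_right _ _

theorem avgPay_le {G : ℝ} {s : S} (hG : ∀ a b, g s a b ≤ G) (hn : n ≠ 0) (a : Fin n → A)
    (b : Fin n → B) : avgPay g s a b ≤ G := by
  rw [avgPay, inv_mul_le_iff₀ (by positivity)]
  calc ∑ i, g s (a i) (b i) ≤ ∑ _i : Fin n, G := sum_le_sum fun i _ => hG _ _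
    _ = n * G := by simp

variable [Fintype S]

theorem dependsBefore_potential (m : ℕ) : DependsBefore m (potential (n := n) g w m) := by
  intro a a' b b' ha hb
  simp only [potential, dependsBefore_shortfall m a a' b b' ha hb]

theorem potential_zero : potential (n := n) g w 0 = fun _ _ => 0 := by
  funext a b
  simp [potential, shortfall, cumPayoff]

theorem potential_succ_le {G : ℝ} (hG : ∀ s a b, |g s a b| ≤ G) (k : Fin n)
    (a : Fin n → A) (b : Fin n → B) :
    potential g w (k + 1) a b ≤ potential g w k a b +
      2 * ∑ t, shortfall g w k a b t * (w - g t (a k) (b k)) +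
      Fintype.card S * (|w| + G) ^ 2 := by
  have step (t : S) : shortfall g w (k + 1) a b t ^ 2 ≤ shortfall g w k a b t ^ 2 +
      2 * (shortfall g w k a b t * (w - g t (a k) (b k))) + (|w| + G) ^ 2 := by
    set d := shortfall g w k a b t
    set c := w - g t (a k) (b k)
    have hnext : shortfall g w (k + 1) a b t ≤ |d + c| := by
      refine max_le ?_ (abs_nonneg _)
      have : (k : ℝ) * w - cumPayoff g k a b t ≤ d := le_max_left _ _
      rw [cumPayoff, sum_ite_val_lt_succ, ← cumPayoff]
      push_cast
      linarith [le_abs_self (d + c)]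
    have hc : |c| ≤ |w| + G := (abs_sub _ _).trans (by linarith [hG t (a k) (b k)])
    have h1 := pow_le_pow_left₀ (shortfall_nonneg _ a b t) hnext 2
    have h2 := pow_le_pow_left₀ (abs_nonneg c) hc 2
    rw [sq_abs] at h1 h2
    linarith
  calc potential g w (k + 1) a b
      ≤ ∑ t, (shortfall g w k a b t ^ 2 +
          2 * (shortfall g w k a b t * (w - g t (a k) (b k))) + (|w| + G) ^ 2) :=
        sum_le_sum fun t _ => step t
    _ = _ := by simp only [potential, sum_add_distrib, ← mul_sum, sum_const, card_univ,
          nsmul_eq_mul]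

theorem sq_le_potential_of_avgPay_lt {δ : ℝ} (hδ : 0 ≤ δ) {s : S} {a : Fin n → A}
    {b : Fin n → B} (h : avgPay g s a b < w - δ) : (n * δ) ^ 2 ≤ potential g w n a b := by
  have hshort : n * δ ≤ shortfall g w n a b s := by
    rcases n.eq_zero_or_pos with rfl | hn
    · simpa using shortfall_nonneg 0 a b s
    have hcum : cumPayoff g n a b s = n * avgPay g s a b := by
      have hn' : (n : ℝ) ≠ 0 := by positivity
      simp [cumPayoff, avgPay, hn']
    have : (n : ℝ) * avgPay g s a b < n * (w - δ) := by gcongr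
    exact le_max_of_le_left (by linarith)
  calc (n * δ) ^ 2 ≤ shortfall g w n a b s ^ 2 := by gcongr
    _ ≤ potential g w n a b :=
        single_le_sum (f := fun t => shortfall g w n a b t ^ 2) (fun t _ => sq_nonneg _)
          (mem_univ s)

end Potential

section Blackwell

variable {S SA SB A B : Type*} [Fintype S] [Fintype A] [Fintype B] [Nonempty A] [Nonempty B]
  {n : ℕ}

/-- When `d = 0`, the prior `(∑ t, d t)⁻¹ • d` is `0` and the action is arbitrary. -/
noncomputable def blackwellAction (g : S → A → B → ℝ) (d : S → ℝ) : A → ℝ :=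
  Classical.choose (exists_mem_stdSimplex_forall_uVal_le g ((∑ t, d t)⁻¹ • d))

variable {g : S → A → B → ℝ} {w : ℝ}

theorem blackwellAction_mem_stdSimplex (d : S → ℝ) : blackwellAction g d ∈ stdSimplex ℝ A :=
  (Classical.choose_spec (exists_mem_stdSimplex_forall_uVal_le g ((∑ t, d t)⁻¹ • d))).1

theorem uVal_le_sum_blackwellAction (d : S → ℝ) (y : B) :
    uVal g ((∑ t, d t)⁻¹ • d) ≤
      ∑ t, ∑ x, ((∑ t, d t)⁻¹ • d) t * blackwellAction g d x * g t x y :=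
  (Classical.choose_spec (exists_mem_stdSimplex_forall_uVal_le g ((∑ t, d t)⁻¹ • d))).2 y

noncomputable def blackwellStrategy (g : S → A → B → ℝ) (w : ℝ) (n : ℕ) :
    BehavStrategy A B SA A n where
  prob i a b _ := blackwellAction g (shortfall g w i a b)
  nonneg i a b _ := (blackwellAction_mem_stdSimplex _).1
  sum_one i a b _ := (blackwellAction_mem_stdSimplex _).2
  causal i a a' b b' _ ha hb := by rw [dependsBefore_shortfall i a a' b b' ha hb]

theorem sum_blackwellAction_mul_le (hw : ∀ q ∈ stdSimplex ℝ S, w ≤ uVal g q) {d : S → ℝ}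
    (hd : ∀ t, 0 ≤ d t) (y : B) :
    ∑ x, blackwellAction g d x * ∑ t, d t * (w - g t x y) ≤ 0 := by
  set μ := blackwellAction g d
  have hμ : ∑ x, μ x = 1 := (blackwellAction_mem_stdSimplex d).2
  have expand : ∑ x, μ x * ∑ t, d t * (w - g t x y) =
      (∑ t, d t) * w - ∑ t, ∑ x, d t * μ x * g t x y := by
    calc ∑ x, μ x * ∑ t, d t * (w - g t x y)
        = ∑ x, (μ x * (∑ t, d t) * w - ∑ t, d t * μ x * g t x y) :=
          sum_congr rfl fun x _ => by
            rw [mul_sum, mul_sum, sum_mul, ← sum_sub_distrib]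
            exact sum_congr rfl fun t _ => by ring
      _ = _ := by rw [sum_sub_distrib, ← sum_mul, ← sum_mul, hμ, one_mul, sum_comm]
  rcases (sum_nonneg fun t _ => hd t : 0 ≤ ∑ t, d t).eq_or_lt with hD | hD
  · have hd0 : ∀ t, d t = 0 := fun t =>
      (sum_eq_zero_iff_of_nonneg fun t _ => hd t).1 hD.symm t (mem_univ t)
    simp [hd0]
  have hq : (∑ t, d t)⁻¹ • d ∈ stdSimplex ℝ S :=
    ⟨fun t => mul_nonneg (inv_nonneg.2 hD.le) (hd t), by
      simp only [Pi.smul_apply, smul_eq_mul, ← mul_sum]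
      exact inv_mul_cancel₀ hD.ne'⟩
  have : (∑ t, d t) * w ≤ ∑ t, ∑ x, d t * μ x * g t x y := by
    calc (∑ t, d t) * w ≤ (∑ t, d t) * ∑ t, ∑ x, ((∑ t, d t)⁻¹ • d) t * μ x * g t x y :=
          mul_le_mul_of_nonneg_left ((hw _ hq).trans (uVal_le_sum_blackwellAction d y)) hD.le
      _ = _ := by
          simp only [mul_sum, Pi.smul_apply, smul_eq_mul]
          exact sum_congr rfl fun t _ => sum_congr rfl fun x _ => by field_simp
  linarith

theorem stageMean_potential_succ_le {G : ℝ} (hG : ∀ s a b, |g s a b| ≤ G)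
    (hw : ∀ q ∈ stdSimplex ℝ S, w ≤ uVal g q) (β : BehavStrategy A B SB B n) (sa : SA) (sb : SB)
    (k : Fin n) (a : Fin n → A) (b : Fin n → B) :
    stageMean (blackwellStrategy g w n) β sa sb k (potential g w (k + 1)) a b ≤
      potential g w k a b + Fintype.card S * (|w| + G) ^ 2 := by
  set d := shortfall g w k a b
  set μ := blackwellAction g d
  set ν := β.prob k a b sb
  set K := potential g w k a b + Fintype.card S * (|w| + G) ^ 2
  have hμ : μ ∈ stdSimplex ℝ A := blackwellAction_mem_stdSimplex d
  have hν : ∑ y, ν y = 1 := β.sum_one ..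
  have hstep (x : A) (y : B) : potential g w (k + 1) (update a k x) (update b k y) ≤
      K + 2 * ∑ t, d t * (w - g t x y) := by
    have h := potential_succ_le (w := w) hG k (update a k x) (update b k y)
    rw [(dependsBefore_potential k).apply_update,
      (dependsBefore_shortfall k).apply_update, update_self, update_self] at h
    linarith
  calc stageMean (blackwellStrategy g w n) β sa sb k (potential g w (k + 1)) a b
      ≤ ∑ x, ∑ y, μ x * ν y * (K + 2 * ∑ t, d t * (w - g t x y)) :=
        sum_le_sum fun x _ => sum_le_sum fun y _ =>
          mul_le_mul_of_nonneg_left (hstep x y) (mul_nonneg (hμ.1 x) (β.nonneg ..))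
    _ = K + 2 * ∑ y, ν y * ∑ x, μ x * ∑ t, d t * (w - g t x y) := by
        have hK : ∑ x, ∑ y, μ x * ν y * K = K := by
          simp only [← sum_mul, ← mul_sum, hμ.2, hν, mul_one, one_mul]
        have hH : ∑ x, ∑ y, μ x * ν y * (2 * ∑ t, d t * (w - g t x y)) =
            2 * ∑ y, ν y * ∑ x, μ x * ∑ t, d t * (w - g t x y) := by
          rw [sum_comm, mul_sum]
          refine sum_congr rfl fun y _ => ?_
          rw [mul_sum, mul_sum]
          exact sum_congr rfl fun x _ => by ring
        simp only [mul_add, sum_add_distrib, hK, hH]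
    _ ≤ K := by
        have := sum_nonpos fun y (_ : y ∈ univ) =>
          mul_nonpos_of_nonneg_of_nonpos (β.nonneg k a b sb y)
            (sum_blackwellAction_mul_le hw (shortfall_nonneg (g := g) (w := w) k a b) y)
        linarith

theorem playExpect_potential_le {G : ℝ} (hG : ∀ s a b, |g s a b| ≤ G)
    (hw : ∀ q ∈ stdSimplex ℝ S, w ≤ uVal g q) (β : BehavStrategy A B SB B n) (sa : SA) (sb : SB)
    {m : ℕ} (hm : m ≤ n) :
    playExpect (blackwellStrategy g w n) β sa sb (potential g w m) ≤
      m * (Fintype.card S * (|w| + G) ^ 2) := by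
  set C := (Fintype.card S : ℝ) * (|w| + G) ^ 2
  induction m with
  | zero => simp [potential_zero, playExpect_const]
  | succ m ih =>
    let k : Fin n := ⟨m, hm⟩
    calc playExpect (blackwellStrategy g w n) β sa sb (potential g w (k + 1))
        = playExpect (blackwellStrategy g w n) β sa sb
            (stageMean (blackwellStrategy g w n) β sa sb k (potential g w (k + 1))) :=
          (playExpect_stageMean _ β sa sb k (dependsBefore_potential _)).symm
      _ ≤ playExpect (blackwellStrategy g w n) β sa sb (fun a b => potential g w k a b + C) :=
          playExpect_mono fun a b => stageMean_potential_succ_le hG hw β sa sb k a b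
      _ ≤ (m + 1 : ℕ) * C := by
          rw [playExpect_add_const]
          push_cast
          linarith [ih (Nat.le_of_succ_le hm)]

theorem probBelow_blackwellStrategy_le {G : ℝ} (hG : ∀ s a b, |g s a b| ≤ G)
    (hw : ∀ q ∈ stdSimplex ℝ S, w ≤ uVal g q) {p : S → ℝ} (hp : ∀ s, 0 ≤ p s)
    (hp1 : ∑ s, p s = 1) (TA : S → SA) (TB : S → SB) (β : BehavStrategy A B SB B n)
    {δ : ℝ} (hδ : 0 < δ) (hn : 0 < n) :
    probBelow g p TA TB (blackwellStrategy g w n) β (w - δ) ≤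
      Fintype.card S * (|w| + G) ^ 2 / (n * δ ^ 2) := by
  set α := blackwellStrategy (SA := SA) g w n
  have hnδ : 0 < ((n : ℝ) * δ) ^ 2 := by positivity
  have hpoint (s : S) (a : Fin n → A) (b : Fin n → B) :
      (if avgPay g s a b < w - δ then inducedP p TA TB α β s a b else 0) ≤
        p s * (playWeight α β (TA s) (TB s) n a b * (potential g w n a b / (n * δ) ^ 2)) := by
    have hW := mul_nonneg (hp s) (playWeight_nonneg α β (TA s) (TB s) n a b)
    split_ifs with h
    · rw [inducedP_eq_mul_playWeight, ← mul_assoc]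
      exact le_mul_of_one_le_right hW
        ((one_le_div hnδ).2 (sq_le_potential_of_avgPay_lt hδ.le h))
    · rw [← mul_assoc]
      exact mul_nonneg hW (div_nonneg (sum_nonneg fun t _ => sq_nonneg _) hnδ.le)
  calc probBelow g p TA TB α β (w - δ)
      ≤ ∑ s, p s * (playExpect α β (TA s) (TB s) (potential g w n) / (n * δ) ^ 2) := by
        simp only [playExpect, sum_div, mul_sum, mul_div_assoc]
        exact sum_le_sum fun s _ => sum_le_sum fun a _ => sum_le_sum fun b _ => hpoint s a b
    _ ≤ ∑ s, p s * (n * (Fintype.card S * (|w| + G) ^ 2) / (n * δ) ^ 2) := by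
        gcongr with s
        · exact hp s
        · exact playExpect_potential_le hG hw β _ _ le_rfl
    _ = Fintype.card S * (|w| + G) ^ 2 / (n * δ ^ 2) := by
        rw [← sum_mul, hp1, one_mul]
        field_simp

theorem stronglyGuarantees_sub_of_forall_le_uVal (hw : ∀ q ∈ stdSimplex ℝ S, w ≤ uVal g q)
    {p : S → ℝ} (hp : ∀ s, 0 ≤ p s) (hp1 : ∑ s, p s = 1) (TA : S → SA) (TB : S → SB) {δ : ℝ}
    (hδ : 0 < δ) :
    StronglyGuarantees g p TA TB (w - δ) := by
  intro ε hε
  obtain ⟨G, hG⟩ := exists_forall_abs_le g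
  set C := (Fintype.card S : ℝ) * (|w| + G) ^ 2
  obtain ⟨N, hN⟩ := exists_nat_gt (C / (δ ^ 2 * ε))
  refine ⟨N, fun n hn => ⟨blackwellStrategy g w n, fun β => ?_⟩⟩
  have hn0 : 0 < n := by omega
  have hNn : C / (δ ^ 2 * ε) < n := hN.trans (by exact_mod_cast hn)
  calc probBelow g p TA TB (blackwellStrategy g w n) β (w - δ) ≤ C / (n * δ ^ 2) :=
        probBelow_blackwellStrategy_le hG hw hp hp1 TA TB β hδ hn0
    _ < ε := by
        rw [div_lt_iff₀ (by positivity)] at hNn ⊢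
        linarith

theorem StronglyGuarantees.le_of_forall_le {G : ℝ} (hG : ∀ s a b, g s a b ≤ G) {p : S → ℝ}
    (hp1 : ∑ s, p s = 1) {TA : S → SA} {TB : S → SB} {v : ℝ}
    (hv : StronglyGuarantees g p TA TB v) : v ≤ G := by
  by_contra! hGv
  obtain ⟨N, hN⟩ := hv 1 one_pos
  obtain ⟨α, hα⟩ := hN (N + 1) N.lt_succ_self
  let β : BehavStrategy A B SB B (N + 1) := .uniform (N + 1)
  have hall (s : S) (a : Fin (N + 1) → A) (b : Fin (N + 1) → B) : avgPay g s a b < v :=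
    (avgPay_le (hG s) N.succ_ne_zero a b).trans_lt hGv
  have hmass (s : S) : ∑ a, ∑ b, playWeight α β (TA s) (TB s) (N + 1) a b = 1 := by
    simpa [playExpect] using playExpect_const α β (TA s) (TB s) 1
  have : probBelow g p TA TB α β v = 1 := by
    simp only [probBelow, hall, if_true, inducedP_eq_mul_playWeight, ← mul_sum, hmass, mul_one,
      hp1]
  linarith [hα β]

end Blackwell

theorem stmt6_general {S A B : Type*} [Fintype S] [Fintype A] [Fintype B]
    [Nonempty A] [Nonempty B]
    (g : S → A → B → ℝ) (p : S → ℝ) (hp : ∀ s, 0 < p s) (hp1 : ∑ s, p s = 1) :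
    (⨅ q : {q : S → ℝ // (∀ s, 0 ≤ q s) ∧ ∑ s, q s = 1}, uVal g q.1) ≤
      vsupS g p (fun _ : S => ()) (id : S → S) := by
  obtain ⟨G, hG⟩ := exists_forall_abs_le g
  have hbdd : BddAbove {v | StronglyGuarantees g p (fun _ : S => ()) (id : S → S) v} :=
    ⟨G, fun v hv => hv.le_of_forall_le (fun s a b => (abs_le.1 (hG s a b)).2) hp1⟩
  exact le_of_forall_sub_le fun δ hδ => le_csSup hbdd <|
    stronglyGuarantees_sub_of_forall_le_uVal (fun q hq => iInf_uVal_le hq) (fun s => (hp s).le)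
      hp1 _ _ hδ

/-- `v_sup^s(p, ∅, 𝟙) ≥ inf { u(q) : q a probability distribution on 𝒮 }`. -/
theorem stmt6 {S A B : Type*} [Fintype S] [Fintype A] [Fintype B]
    [Nonempty S] [Nonempty A] [Nonempty B]
    (g : S → A → B → ℝ) (p : S → ℝ) (hp : ∀ s, 0 < p s) (hp1 : ∑ s, p s = 1) :
    (⨅ q : {q : S → ℝ // (∀ s, 0 ≤ q s) ∧ ∑ s, q s = 1}, uVal g q.1) ≤
      vsupS g p (fun _ : S => ()) (id : S → S) :=
  stmt6_general g p hp hp1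
end
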